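/- arXiv:1507.07974 — 2 statements merged into one kernel-verified Lean document; each statement's English description precedes it below -/
import Mathlib

section
/- For any Hermitian matrix A with spectral norm ‖A‖ ≤ 1, exp(A) ≼ I + A + A², where ≼ denotes the Loewner (positive semidefinite) order. -/
open scoped ComplexOrder

private lemma real_exp_le_key {x : ℝ} (h : |x| ≤ 1) :
    Real.exp x ≤ 1 + x + x ^ 2 := by
  have hb := Real.exp_bound h (n := 2) (by norm_num)
  have hs : ∑ m ∈ Finset.range 2, x ^ m / (Nat.factorial m) = 1 + x := by
    simp [Finset.sum_range_succ]
  rw [hs] at hb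
  have h2 : Real.exp x - (1 + x) ≤ |x| ^ 2 * ((2 : ℕ).succ / ((2 : ℕ).factorial * 2)) :=
    (abs_le.mp hb).2
  have h3 : |x| ^ 2 = x ^ 2 := sq_abs x
  norm_num [Nat.factorial, h3] at h2
  nlinarith [sq_nonneg x]

set_option synthInstance.maxHeartbeats 1000000 in
/-- For a Hermitian matrix `A` with spectral norm at most 1,
`exp A ≼ I + A + A²` in the Loewner order. -/
theorem exp_le_one_add_add_sq {n : ℕ} (A : Matrix (Fin n) (Fin n) ℂ)
    (hA : A.IsHermitian) (hnorm : ‖Matrix.toEuclideanCLM (𝕜 := ℂ) A‖ ≤ 1) :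
    ((1 : Matrix (Fin n) (Fin n) ℂ) + A + A ^ 2 - NormedSpace.exp A).PosSemidef := by
  -- eigenvalue bound
  have hspec : ∀ i, |hA.eigenvalues i| ≤ 1 := by
    intro i
    have h1 : (hA.eigenvalues i : ℂ) ∈ spectrum ℂ A :=
      spectrum.algebraMap_mem ℂ (hA.eigenvalues_mem_spectrum_real i)
    have h2 : (hA.eigenvalues i : ℂ) ∈ spectrum ℂ (Matrix.toEuclideanCLM (𝕜 := ℂ) A) := by
      rwa [AlgEquiv.spectrum_eq]
    haveI : NeZero n := ⟨fun h => (h ▸ i).elim0⟩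
    have h3 := spectrum.norm_le_norm_of_mem h2
    have : ‖(hA.eigenvalues i : ℂ)‖ ≤ 1 := h3.trans hnorm
    simpa [Complex.norm_real] using this
  set U : Matrix (Fin n) (Fin n) ℂ := (hA.eigenvectorUnitary : Matrix (Fin n) (Fin n) ℂ) with hUdef
  set d : Fin n → ℂ := fun i => (hA.eigenvalues i : ℂ) with hddef
  have hUU : U * star U = 1 := Matrix.mem_unitaryGroup_iff.mp hA.eigenvectorUnitary.2
  have hUU' : star U * U = 1 := Matrix.mem_unitaryGroup_iff'.mp hA.eigenvectorUnitary.2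
  have hAeq : A = U * Matrix.diagonal d * star U := hA.spectral_theorem
  have hUinv : U⁻¹ = star U := Matrix.inv_eq_right_inv hUU
  have hUisUnit : IsUnit U := (Matrix.isUnit_iff_isUnit_det U).mpr
    (Matrix.isUnit_det_of_right_inverse hUU)
  -- exponential
  have hexp : NormedSpace.exp A
      = U * Matrix.diagonal (fun i => NormedSpace.exp (d i)) * star U := by
    rw [hAeq, ← hUinv, Matrix.exp_conj U (Matrix.diagonal d) hUisUnit,
      Matrix.exp_diagonal, hUinv, Pi.exp_def]
  -- square
  have hsq : A ^ 2 = U * Matrix.diagonal (fun i => d i ^ 2) * star U := by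
    rw [hAeq]
    rw [pow_two]
    calc (U * Matrix.diagonal d * star U) * (U * Matrix.diagonal d * star U)
        = U * (Matrix.diagonal d * (star U * U) * Matrix.diagonal d) * star U := by
          simp [Matrix.mul_assoc]
      _ = U * Matrix.diagonal (fun i => d i ^ 2) * star U := by
          rw [hUU', Matrix.mul_one, Matrix.diagonal_mul_diagonal]
          congr 1
          congr 1
          ext i
          ring
  have hone : (1 : Matrix (Fin n) (Fin n) ℂ) = U * 1 * star U := by
    rw [Matrix.mul_one, hUU]
  -- combine
  have hcomb : (1 : Matrix (Fin n) (Fin n) ℂ) + A + A ^ 2 - NormedSpace.exp A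
      = U * Matrix.diagonal (fun i => 1 + d i + d i ^ 2 - NormedSpace.exp (d i)) * star U := by
    conv_lhs => rw [hone, hexp, hsq]
    conv_lhs => rw [hAeq]
    rw [← Matrix.add_mul, ← Matrix.add_mul, ← Matrix.sub_mul,
      ← Matrix.mul_add, ← Matrix.mul_add, ← Matrix.mul_sub]
    congr 2
    ext i j
    rcases eq_or_ne i j with h | h <;>
      simp [Matrix.diagonal_apply, Matrix.one_apply, h]
  rw [hcomb]
  have hdiag : (Matrix.diagonal
      (fun i => 1 + d i + d i ^ 2 - NormedSpace.exp (d i))).PosSemidef := by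
    rw [Matrix.posSemidef_diagonal_iff]
    intro i
    have hx := hspec i
    have hre : (1 : ℂ) + d i + d i ^ 2 - NormedSpace.exp (d i)
        = ((1 + hA.eigenvalues i + hA.eigenvalues i ^ 2 - Real.exp (hA.eigenvalues i) : ℝ) : ℂ) := by
      have : NormedSpace.exp (d i) = Complex.exp (d i) := by
        rw [Complex.exp_eq_exp_ℂ]
      rw [this, hddef]
      push_cast [Complex.ofReal_exp]
      ring
    rw [hre]
    rw [Complex.zero_le_real]
    have := real_exp_le_key hx
    linarith
  have := hdiag.mul_mul_conjTranspose_same U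
  simpa [Matrix.star_eq_conjTranspose] using this
end

section
/- For symmetric positive definite matrices of a fixed size, the von Neumann divergence Δ(W', W) = Tr(W' log W' − W' log W − W' + W) is nonnegative, and equals zero if and only if W' = W. -/
/-- Matrix logarithm of a symmetric (Hermitian) real matrix, via the spectral
decomposition; junk value `0` for non-Hermitian input. -/
noncomputable def matLog {n : ℕ} (A : Matrix (Fin n) (Fin n) ℝ) : Matrix (Fin n) (Fin n) ℝ :=
  if h : A.IsHermitian then
    (h.eigenvectorUnitary : Matrix (Fin n) (Fin n) ℝ) *
      Matrix.diagonal (fun i => Real.log (h.eigenvalues i)) *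
      star (h.eigenvectorUnitary : Matrix (Fin n) (Fin n) ℝ)
  else 0

/-- Klein inequality, scalar version. -/
lemma klein_nonneg {a b : ℝ} (ha : 0 < a) (hb : 0 < b) :
    0 ≤ a * Real.log a - a * Real.log b - a + b := by
  have h := Real.log_le_sub_one_of_pos (show 0 < b / a from div_pos hb ha)
  rw [Real.log_div hb.ne' ha.ne'] at h
  have h2 := mul_le_mul_of_nonneg_left h ha.le
  have hba : a * (b / a) = b := by field_simp
  nlinarith

/-- Equality case of the scalar Klein inequality. -/
lemma klein_eq {a b : ℝ} (ha : 0 < a) (hb : 0 < b)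
    (h : a * Real.log a - a * Real.log b - a + b = 0) : a = b := by
  by_contra hne
  have hba : b / a ≠ 1 := fun hh => hne ((div_eq_one_iff_eq ha.ne').mp hh).symm
  have h2 := Real.log_lt_sub_one_of_pos (div_pos hb ha) hba
  rw [Real.log_div hb.ne' ha.ne'] at h2
  have h3 := mul_lt_mul_of_pos_left h2 ha
  have hba2 : a * (b / a) = b := by field_simp
  nlinarith

lemma trace_conj {n : ℕ} (u d : Matrix (Fin n) (Fin n) ℝ) (hu : star u * u = 1) :
    (u * d * star u).trace = d.trace := by
  rw [Matrix.trace_mul_cycle, hu, Matrix.one_mul]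

/-- The von Neumann divergence `Δ(W', W) = Tr(W' log W' − W' log W − W' + W)` between
symmetric positive definite matrices is nonnegative, and vanishes iff `W' = W`. -/
theorem vonNeumann_divergence_nonneg {n : ℕ} (W W' : Matrix (Fin n) (Fin n) ℝ)
    (hW : W.PosDef) (hW' : W'.PosDef) :
    0 ≤ (W' * matLog W' - W' * matLog W - W' + W).trace ∧
    ((W' * matLog W' - W' * matLog W - W' + W).trace = 0 ↔ W' = W) := by
  classical
  have hH : W.IsHermitian := hW.1
  have hH' : W'.IsHermitian := hW'.1
  set U : Matrix (Fin n) (Fin n) ℝ := (hH.eigenvectorUnitary : Matrix (Fin n) (Fin n) ℝ)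
    with hUdef
  set U' : Matrix (Fin n) (Fin n) ℝ := (hH'.eigenvectorUnitary : Matrix (Fin n) (Fin n) ℝ)
    with hU'def
  set a : Fin n → ℝ := hH'.eigenvalues with hadef
  set b : Fin n → ℝ := hH.eigenvalues with hbdef
  set M : Matrix (Fin n) (Fin n) ℝ := star U' * U with hMdef
  have ha : ∀ i, 0 < a i := hW'.eigenvalues_pos
  have hb : ∀ i, 0 < b i := hW.eigenvalues_pos
  have hUU : star U * U = 1 := (Unitary.mem_iff.mp hH.eigenvectorUnitary.2).1
  have hUU2 : U * star U = 1 := (Unitary.mem_iff.mp hH.eigenvectorUnitary.2).2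
  have hU'U' : star U' * U' = 1 := (Unitary.mem_iff.mp hH'.eigenvectorUnitary.2).1
  have hU'U'2 : U' * star U' = 1 := (Unitary.mem_iff.mp hH'.eigenvectorUnitary.2).2
  have hstarM : star M = star U * U' := by rw [hMdef, star_mul, star_star]
  have hMM : star M * M = 1 := by
    rw [hstarM, hMdef, Matrix.mul_assoc, ← Matrix.mul_assoc U', hU'U'2, Matrix.one_mul, hUU]
  have hMM2 : M * star M = 1 := by
    rw [hstarM, hMdef, Matrix.mul_assoc, ← Matrix.mul_assoc U, hUU2, Matrix.one_mul, hU'U']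
  -- spectral decompositions
  have hWspec : W = U * Matrix.diagonal b * star U := by
    rw [hUdef, hbdef]; simpa using hH.spectral_theorem
  have hW'spec : W' = U' * Matrix.diagonal a * star U' := by
    rw [hU'def, hadef]; simpa using hH'.spectral_theorem
  have hlogW : matLog W = U * Matrix.diagonal (fun i => Real.log (b i)) * star U := by
    rw [hUdef, hbdef]; simp only [matLog]; rw [dif_pos hH]
  have hlogW' : matLog W' = U' * Matrix.diagonal (fun i => Real.log (a i)) * star U' := by
    rw [hU'def, hadef]; simp only [matLog]; rw [dif_pos hH']
  -- the four trace computations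
  have T1 : (W' * matLog W').trace = ∑ i, a i * Real.log (a i) := by
    rw [hlogW']
    conv_lhs => rw [hW'spec]
    have e1 : U' * Matrix.diagonal a * star U' *
          (U' * Matrix.diagonal (fun i => Real.log (a i)) * star U')
        = U' * (Matrix.diagonal a * Matrix.diagonal (fun i => Real.log (a i))) * star U' := by
      simp only [Matrix.mul_assoc]
      rw [← Matrix.mul_assoc (star U') U', hU'U', Matrix.one_mul]
    rw [e1, trace_conj _ _ hU'U', Matrix.diagonal_mul_diagonal, Matrix.trace_diagonal]
  have T2 : (W' * matLog W).trace
      = ∑ i, ∑ j, a i * (M i j * Real.log (b j) * M i j) := by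
    rw [hlogW]
    conv_lhs => rw [hW'spec]
    have e1 : U' * Matrix.diagonal a * star U' *
          (U * Matrix.diagonal (fun i => Real.log (b i)) * star U)
        = U' * (Matrix.diagonal a *
            (M * Matrix.diagonal (fun i => Real.log (b i)) * star M)) * star U' := by
      rw [hMdef, hstarM]
      simp only [Matrix.mul_assoc]
      rw [hU'U'2, Matrix.mul_one]
    rw [e1, trace_conj _ _ hU'U', Matrix.trace]
    refine Finset.sum_congr rfl fun i _ => ?_
    rw [Matrix.diag_apply, Matrix.diagonal_mul, Matrix.mul_apply, Finset.mul_sum]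
    refine Finset.sum_congr rfl fun j _ => ?_
    rw [Matrix.mul_diagonal, Matrix.star_apply, star_trivial]
  have T3 : W'.trace = ∑ i, a i := by
    conv_lhs => rw [hW'spec]
    rw [trace_conj _ _ hU'U', Matrix.trace_diagonal]
  have T4 : W.trace = ∑ i, b i := by
    conv_lhs => rw [hWspec]
    rw [trace_conj _ _ hUU, Matrix.trace_diagonal]
  -- row and column sums of the doubly stochastic matrix (M i j)^2
  have row : ∀ i, ∑ j, M i j * M i j = 1 := by
    intro i
    have h1 := congrFun (congrFun hMM2 i) i
    simpa [Matrix.mul_apply, Matrix.one_apply, Matrix.star_apply] using h1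
  have col : ∀ j, ∑ i, M i j * M i j = 1 := by
    intro j
    have h1 := congrFun (congrFun hMM j) j
    simpa [Matrix.mul_apply, Matrix.one_apply, Matrix.star_apply] using h1
  -- the key identity
  have key : (W' * matLog W' - W' * matLog W - W' + W).trace
      = ∑ i, ∑ j, (M i j * M i j) *
          (a i * Real.log (a i) - a i * Real.log (b j) - a i + b j) := by
    rw [Matrix.trace_add, Matrix.trace_sub, Matrix.trace_sub, T1, T2, T3, T4]
    have E1 : ∑ i, a i * Real.log (a i)
        = ∑ i, ∑ j, (M i j * M i j) * (a i * Real.log (a i)) := by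
      refine Finset.sum_congr rfl fun i _ => ?_
      rw [← Finset.sum_mul, row i, one_mul]
    have E2 : ∑ i, ∑ j, a i * (M i j * Real.log (b j) * M i j)
        = ∑ i, ∑ j, (M i j * M i j) * (a i * Real.log (b j)) := by
      refine Finset.sum_congr rfl fun i _ => Finset.sum_congr rfl fun j _ => by ring
    have E3 : ∑ i, a i = ∑ i, ∑ j, (M i j * M i j) * a i := by
      refine Finset.sum_congr rfl fun i _ => ?_
      rw [← Finset.sum_mul, row i, one_mul]
    have E4 : ∑ i, b i = ∑ i, ∑ j, (M i j * M i j) * b j := by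
      rw [Finset.sum_comm]
      refine Finset.sum_congr rfl fun j _ => ?_
      rw [← Finset.sum_mul, col j, one_mul]
    rw [E1, E2, E3, E4]
    simp only [← Finset.sum_sub_distrib, ← Finset.sum_add_distrib]
    exact Finset.sum_congr rfl fun i _ => Finset.sum_congr rfl fun j _ => by ring
  have hterm_nonneg : ∀ i j, 0 ≤ (M i j * M i j) *
      (a i * Real.log (a i) - a i * Real.log (b j) - a i + b j) :=
    fun i j => mul_nonneg (mul_self_nonneg _) (klein_nonneg (ha i) (hb j))
  constructor
  · rw [key]
    exact Finset.sum_nonneg fun i _ => Finset.sum_nonneg fun j _ => hterm_nonneg i j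
  constructor
  · intro h0
    rw [key] at h0
    have hz : ∀ i ∈ Finset.univ, ∀ j ∈ Finset.univ, (M i j * M i j) *
        (a i * Real.log (a i) - a i * Real.log (b j) - a i + b j) = 0 := by
      intro i hi
      have h1 := (Finset.sum_eq_zero_iff_of_nonneg
        (fun i _ => Finset.sum_nonneg fun j _ => hterm_nonneg i j)).mp h0 i hi
      exact (Finset.sum_eq_zero_iff_of_nonneg (fun j _ => hterm_nonneg i j)).mp h1
    have hcomm : ∀ i j, M i j * (a i - b j) = 0 := by
      intro i j
      rcases mul_eq_zero.mp (hz i (Finset.mem_univ i) j (Finset.mem_univ j)) with h | h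
      · rw [mul_self_eq_zero.mp h, zero_mul]
      · rw [klein_eq (ha i) (hb j) h, sub_self, mul_zero]
    have hDM : Matrix.diagonal a * M = M * Matrix.diagonal b := by
      ext i j
      rw [Matrix.diagonal_mul, Matrix.mul_diagonal]
      linear_combination hcomm i j
    have hU'M : U' * M = U := by
      rw [hMdef, ← Matrix.mul_assoc, hU'U'2, Matrix.one_mul]
    have hstarU' : star U' = M * star U := by
      have h1 : U' = U * star M := by
        rw [hstarM, ← Matrix.mul_assoc, hUU2, Matrix.one_mul]
      rw [h1, star_mul, star_star]
    rw [hW'spec, hWspec, hstarU']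
    calc U' * Matrix.diagonal a * (M * star U)
        = U' * (Matrix.diagonal a * M) * star U := by simp only [Matrix.mul_assoc]
      _ = U' * (M * Matrix.diagonal b) * star U := by rw [hDM]
      _ = U' * M * Matrix.diagonal b * star U := by simp only [Matrix.mul_assoc]
      _ = U * Matrix.diagonal b * star U := by rw [hU'M]
  · intro h
    rw [h]
    simp
end
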